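/- Let f(x,y) = (1/2)(1−y²)x + (1/2)·sqrt((1−y²)²x² + 4y²) and p = d²/(d+1)³. Define λ₁' ≤ 0.2 and the recursion λ_{i+1} = (p + (1−p)·f(λ_i⁴, λ₂))^{1/3} with λ₂ ≤ 0.2 and d ≥ 6. Then λ_i < 0.86 for all i. -/
import Mathlib
lemma key16 (p s X B : ℝ) (hp0 : 0 ≤ p) (hp1 : p ≤ 36/343)
    (hs0 : 0 ≤ s) (hs1 : s ≤ 1/25) (hX0 : 0 ≤ X) (hX1 : X ≤ (86/100)^4)
    (hB0 : 0 ≤ B) (hB2 : B^2 = (1-s)^2*X^2 + 4*s) :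
    p + (1-p)*((1/2)*(1-s)*X + (1/2)*B) < (86/100)^3 := by
  have hs1' : (0:ℝ) ≤ 1 - s := by linarith
  have hw : (1-s)*X ≤ (1-s)*(86/100)^4 :=
    mul_le_mul_of_nonneg_left hX1 hs1'
  have hw0 : 0 ≤ (1-s)*X := mul_nonneg hs1' hX0
  have hB : 2*(6604/10000)*B ≤ (1-s)^2*X^2 + 4*s + (6604/10000)^2 := by
    nlinarith [sq_nonneg (B - 6604/10000)]
  have hf : (1/2)*(1-s)*X + (1/2)*B < 5933/10000 := by
    nlinarith [mul_nonneg hs0 (by linarith : (0:ℝ) ≤ 1/25 - s), sq_nonneg ((1-s)*X)]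
  have hf0 : 0 ≤ (1/2)*(1-s)*X + (1/2)*B := by positivity
  nlinarith [mul_nonneg hp0 (by linarith : (0:ℝ) ≤ 1 - ((1/2)*(1-s)*X + (1/2)*B))]

/-- Let `d ≥ 6`, `p = d²/(d+1)³`,
`f(x,y) = (1/2)(1−y²)x + (1/2)√((1−y²)²x² + 4y²)`, and `0 ≤ λ₂ ≤ 0.2`.  If
`0 ≤ λ_1 ≤ 0.2` and `λ_{i+1} = (p + (1−p)·f(λ_i⁴, λ₂))^{1/3}`, then `λ_i < 0.86` for all
`i ≥ 1`. -/
theorem stmt16 (d : ℕ) (hd : 6 ≤ d) (l₂ : ℝ) (hl₂ : 0 ≤ l₂) (hl₂' : l₂ ≤ 0.2)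
    (lam : ℕ → ℝ) (h1 : 0 ≤ lam 1) (h1' : lam 1 ≤ 0.2)
    (hrec : ∀ i, 1 ≤ i → lam (i + 1) =
      ((d : ℝ) ^ 2 / ((d : ℝ) + 1) ^ 3 +
        (1 - (d : ℝ) ^ 2 / ((d : ℝ) + 1) ^ 3) *
          ((1 / 2) * (1 - l₂ ^ 2) * lam i ^ 4 +
            (1 / 2) * Real.sqrt ((1 - l₂ ^ 2) ^ 2 * (lam i ^ 4) ^ 2 + 4 * l₂ ^ 2))) ^
        ((1 : ℝ) / 3)) :
    ∀ i, 1 ≤ i → lam i < 0.86 := by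
  set p : ℝ := (d : ℝ) ^ 2 / ((d : ℝ) + 1) ^ 3 with hpdef
  have hd6 : (6:ℝ) ≤ (d:ℝ) := by exact_mod_cast hd
  have hden : (0:ℝ) < ((d:ℝ)+1)^3 := by positivity
  have hp0 : 0 ≤ p := by positivity
  have hp1 : p ≤ 36/343 := by
    rw [hpdef, div_le_iff₀ hden]
    nlinarith [mul_nonneg (mul_nonneg (by linarith : (0:ℝ) ≤ (d:ℝ)-6)
      (by linarith : (0:ℝ) ≤ (d:ℝ)-6)) (by linarith : (0:ℝ) ≤ (d:ℝ)-6),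
      sq_nonneg ((d:ℝ)-6)]
  have hs0 : (0:ℝ) ≤ l₂^2 := sq_nonneg _
  have hs1 : l₂^2 ≤ 1/25 := by nlinarith
  have main : ∀ i, 1 ≤ i → 0 ≤ lam i ∧ lam i < 86/100 := by
    intro i hi
    induction i, hi using Nat.le_induction with
    | base => exact ⟨h1, by linarith⟩
    | succ i hi ih =>
      obtain ⟨h0, hlt⟩ := ih
      set X : ℝ := lam i ^ 4 with hXdef
      have hX0 : 0 ≤ X := by positivity
      have hX1 : X ≤ (86/100)^4 := by
        rw [hXdef]
        exact pow_le_pow_left₀ h0 (le_of_lt hlt) 4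
      have harg : (0:ℝ) ≤ (1 - l₂^2)^2 * X^2 + 4*l₂^2 := by positivity
      set B : ℝ := Real.sqrt ((1 - l₂^2)^2 * X^2 + 4*l₂^2) with hBdef
      have hB0 : 0 ≤ B := Real.sqrt_nonneg _
      have hB2 : B^2 = (1 - l₂^2)^2 * X^2 + 4*l₂^2 := Real.sq_sqrt harg
      have hkey := key16 p (l₂^2) X B hp0 hp1 hs0 hs1 hX0 hX1 hB0 (by linarith [hB2])
      have hf0 : 0 ≤ (1/2)*(1 - l₂^2)*X + (1/2)*B := by
        have : (0:ℝ) ≤ 1 - l₂^2 := by linarith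
        positivity
      have hz0 : 0 ≤ p + (1-p)*((1/2)*(1 - l₂^2)*X + (1/2)*B) := by
        have : p ≤ 1 := by linarith
        nlinarith
      rw [hrec i hi]
      have heq : (d : ℝ) ^ 2 / ((d : ℝ) + 1) ^ 3 +
          (1 - (d : ℝ) ^ 2 / ((d : ℝ) + 1) ^ 3) *
            ((1 / 2) * (1 - l₂ ^ 2) * lam i ^ 4 +
              (1 / 2) * Real.sqrt ((1 - l₂ ^ 2) ^ 2 * (lam i ^ 4) ^ 2 + 4 * l₂ ^ 2))
          = p + (1-p)*((1/2)*(1 - l₂^2)*X + (1/2)*B) := by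
        rw [hpdef, hXdef, hBdef]
      rw [heq]
      constructor
      · exact Real.rpow_nonneg hz0 _
      · have hlt' := Real.rpow_lt_rpow hz0 hkey (by norm_num : (0:ℝ) < 1/3)
        have hcube : (((86:ℝ)/100)^(3:ℕ))^((1:ℝ)/3) = 86/100 := by
          rw [← Real.rpow_natCast ((86:ℝ)/100) 3, ← Real.rpow_mul (by norm_num)]
          norm_num
        calc (p + (1-p)*((1/2)*(1 - l₂^2)*X + (1/2)*B)) ^ ((1:ℝ)/3)
            < (((86:ℝ)/100)^(3:ℕ))^((1:ℝ)/3) := hlt'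
          _ = 86/100 := hcube
  intro i hi
  have := (main i hi).2
  norm_num at this ⊢
  linarith
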